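/- arXiv:2508.06893 — 2 statements merged into one kernel-verified Lean document; each statement's English description precedes it below -/
import Mathlib

section
/- Consider n ≥ 1 agents with state x_k ∈ ℝⁿ and surplus s_k ∈ ℝⁿ initialized with s_0 = 0 and updated for all k ∈ ℕ by x_{k+1} = x_k + γ s_k + (R − I) x̌_k and s_{k+1} = x_k − x_{k+1} + s_k + (C − I) š_k, where γ ∈ ℝ, x̌_k, š_k ∈ ℝⁿ are arbitrary sequences of vectors, R ∈ ℝ^{n×n} is any matrix and C ∈ ℝ^{n×n} is column-stochastic (𝟙ᵀC = 𝟙ᵀ). Then for every k ∈ ℕ, 𝟙ᵀ(x_k + s_k) = 𝟙ᵀ x_0; in particular the sum of states plus surpluses (hence the state average) is preserved for all time. -/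
/-- Mass preservation for all time for the push-pull quantized consensus iteration
with `s 0 = 0`: for every `k`, `𝟙ᵀ(x_k + s_k) = 𝟙ᵀ x_0`. -/
theorem stmt_1 (n : ℕ) (hn : 1 ≤ n) (γ : ℝ)
    (R C : Matrix (Fin n) (Fin n) ℝ)
    (hC : ∀ j, ∑ l, C l j = 1)
    (x s xc sc : ℕ → Fin n → ℝ)
    (hs0 : s 0 = 0)
    (hx : ∀ k, x (k + 1) = x k + γ • s k + (R - 1).mulVec (xc k))
    (hs : ∀ k, s (k + 1) = x k - x (k + 1) + s k + (C - 1).mulVec (sc k)) :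
    ∀ k, ∑ i, (x k i + s k i) = ∑ i, x 0 i := by
  have hmv : ∀ k, ∑ i, ((C - 1).mulVec (sc k)) i = 0 := by
    intro k
    simp only [Matrix.mulVec, dotProduct]
    rw [Finset.sum_comm]
    refine Finset.sum_eq_zero fun j _ => ?_
    rw [← Finset.sum_mul]
    have : ∑ i, (C - 1) i j = 0 := by
      simp [Matrix.sub_apply, Finset.sum_sub_distrib, hC j, Matrix.one_apply,
        Finset.sum_ite_eq' Finset.univ j (fun _ => (1:ℝ))]
    rw [this, zero_mul]
  intro k
  induction k with
  | zero => simp [hs0]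
  | succ k ih =>
      have h := hs k
      calc ∑ i, (x (k+1) i + s (k+1) i)
          = ∑ i, (x k i + s k i + ((C - 1).mulVec (sc k)) i) := by
            refine Finset.sum_congr rfl fun i _ => ?_
            rw [h]; simp [Pi.add_apply, Pi.sub_apply]; ring
        _ = ∑ i, (x k i + s k i) + ∑ i, ((C - 1).mulVec (sc k)) i := by
            rw [Finset.sum_add_distrib]
        _ = ∑ i, x 0 i := by rw [hmv, add_zero, ih]
end

section
/- Let A ∈ ℝ^{m×m} and B ∈ ℝ^{m×p} be matrices such that the powers A^k converge to a matrix P as k → ∞, and suppose there exist C ≥ 0 and 0 ≤ ρ < 1 with ‖A^k · B‖ ≤ C·ρ^k for all k ∈ ℕ. Let (e_k)_{k ∈ ℕ} be a sequence in ℝ^p with e_k → 0, and define z_{k+1} = A z_k + B e_k from an arbitrary z_0 ∈ ℝ^m. Then z_k → P z_0 as k → ∞; that is, a linear iteration driven by a vanishing perturbation entering through directions on which the powers of A decay geometrically converges to the same limit as the unperturbed iteration. -/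
attribute [local instance] Matrix.normedAddCommGroup

open Filter Finset Topology Matrix

/-!
Unrolling the recursion gives the variation-of-constants formula
`z k = A ^ k z₀ + ∑_{j < k} (A ^ j B) e_{k-1-j}`.
The first term tends to `P z₀`. The second is a discrete convolution of the summable kernel
`‖A ^ j B‖ ≤ C ρ ^ j` with the null sequence `e`, and so tends to `0` by Tannery's theorem
(dominated convergence for series).
-/

theorem tendsto_sum_range_mul_reflect_zero {b u : ℕ → ℝ} (hb : Summable b)
    (hu : Tendsto u atTop (𝓝 0)) :
    Tendsto (fun k => ∑ j ∈ range k, b j * u (k - 1 - j)) atTop (𝓝 0) := by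
  obtain ⟨U, hU⟩ : ∃ U, ∀ n, ‖u n‖ ≤ U := by
    obtain ⟨U, hU⟩ := (tendsto_norm.comp hu).bddAbove_range
    exact ⟨U, fun n => hU (Set.mem_range_self n)⟩
  let f : ℕ → ℕ → ℝ := fun k j => if j < k then b j * u (k - 1 - j) else 0
  have hf_tsum (k : ℕ) : ∑' j, f k j = ∑ j ∈ range k, b j * u (k - 1 - j) := by
    rw [tsum_eq_sum (s := range k) fun j hj => if_neg (by simpa using hj)]
    exact sum_congr rfl fun j hj => if_pos (mem_range.1 hj)
  have hf_lim (j : ℕ) : Tendsto (f · j) atTop (𝓝 0) := by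
    have hshift : Tendsto (fun k => k - 1 - j) atTop atTop :=
      (tendsto_sub_atTop_nat j).comp (tendsto_sub_atTop_nat 1)
    have hlim := (hu.comp hshift).const_mul (b j)
    rw [mul_zero] at hlim
    refine hlim.congr' ?_
    filter_upwards [eventually_gt_atTop j] with k hk
    simp [f, hk]
  have hf_bound (k j : ℕ) : ‖f k j‖ ≤ ‖b j‖ * U := by
    by_cases hjk : j < k
    · simpa [f, hjk, norm_mul] using mul_le_mul_of_nonneg_left (hU _) (norm_nonneg (b j))
    · simpa [f, hjk] using mul_nonneg (norm_nonneg (b j)) ((norm_nonneg _).trans (hU 0))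
  have hT := tendsto_tsum_of_dominated_convergence (hb.norm.mul_right U) hf_lim
    (Eventually.of_forall hf_bound)
  simpa only [hf_tsum, tsum_zero] using hT

theorem tendsto_sum_range_reflect_zero_of_norm_le {E F : Type*} [SeminormedAddCommGroup E]
    [SeminormedAddCommGroup F] {f : ℕ → E → F} {b : ℕ → ℝ} (hb : Summable b)
    (hf : ∀ j x, ‖f j x‖ ≤ b j * ‖x‖) {e : ℕ → E} (he : Tendsto e atTop (𝓝 0)) :
    Tendsto (fun k => ∑ j ∈ range k, f j (e (k - 1 - j))) atTop (𝓝 0) := by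
  refine squeeze_zero_norm (fun k => (norm_sum_le _ _).trans (sum_le_sum fun j _ => hf _ _)) ?_
  exact tendsto_sum_range_mul_reflect_zero hb (tendsto_zero_iff_norm_tendsto_zero.mp he)

namespace Matrix

variable {l n α : Type*} [Fintype l] [Fintype n]

theorem norm_mulVec_le_card_mul [NormedRing α] (M : Matrix l n α) (v : n → α) :
    ‖M *ᵥ v‖ ≤ Fintype.card n * ‖M‖ * ‖v‖ := by
  refine pi_norm_le_iff_of_nonneg (by positivity) |>.mpr fun i => ?_
  calc ‖(M *ᵥ v) i‖ = ‖∑ j, M i j * v j‖ := rfl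
    _ ≤ ∑ j, ‖M i j‖ * ‖v j‖ := (norm_sum_le _ _).trans (sum_le_sum fun j _ => norm_mul_le _ _)
    _ ≤ ∑ _j : n, ‖M‖ * ‖v‖ := sum_le_sum fun j _ => mul_le_mul
          (norm_entry_le_entrywise_sup_norm M) (norm_le_pi_norm v j) (norm_nonneg _)
          (norm_nonneg _)
    _ = Fintype.card n * ‖M‖ * ‖v‖ := by simp [mul_assoc]

variable [DecidableEq l] [CommSemiring α]

theorem eq_pow_mulVec_add_sum_of_iterate {A : Matrix l l α} {B : Matrix l n α}
    {e : ℕ → n → α} {z : ℕ → l → α} (hz : ∀ k, z (k + 1) = A *ᵥ z k + B *ᵥ e k) (k : ℕ) :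
    z k = A ^ k *ᵥ z 0 + ∑ j ∈ range k, (A ^ j * B) *ᵥ e (k - 1 - j) := by
  induction k with
  | zero => simp
  | succ k ih =>
    have hshift : A *ᵥ ∑ j ∈ range k, (A ^ j * B) *ᵥ e (k - 1 - j)
        = ∑ j ∈ range k, (A ^ (j + 1) * B) *ᵥ e (k - (j + 1)) := by
      simp only [mulVec_sum, mulVec_mulVec, ← Matrix.mul_assoc, ← pow_succ', Nat.sub_sub,
        Nat.add_comm 1]
    rw [hz, ih, mulVec_add, mulVec_mulVec, ← pow_succ', hshift, sum_range_succ']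
    simp [add_assoc]

end Matrix

theorem stmt_13_general (m p : ℕ)
    (A : Matrix (Fin m) (Fin m) ℝ) (B : Matrix (Fin m) (Fin p) ℝ)
    (P : Matrix (Fin m) (Fin m) ℝ)
    (hP : Tendsto (fun k => A ^ k) atTop (nhds P))
    (C ρ : ℝ) (hρ0 : 0 ≤ ρ) (hρ1 : ρ < 1)
    (hAB : ∀ k : ℕ, ‖A ^ k * B‖ ≤ C * ρ ^ k)
    (e : ℕ → Fin p → ℝ) (he : Tendsto e atTop (nhds 0))
    (z : ℕ → Fin m → ℝ)
    (hz : ∀ k, z (k + 1) = A.mulVec (z k) + B.mulVec (e k)) :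
    Tendsto z atTop (nhds (P.mulVec (z 0))) := by
  have hfree : Tendsto (fun k => A ^ k *ᵥ z 0) atTop (𝓝 (P *ᵥ z 0)) :=
    ((continuous_id.matrix_mulVec continuous_const).tendsto P).comp hP
  have hkernel (j : ℕ) (x : Fin p → ℝ) : ‖(A ^ j * B) *ᵥ x‖ ≤ p * C * ρ ^ j * ‖x‖ := by
    calc ‖(A ^ j * B) *ᵥ x‖ ≤ p * ‖A ^ j * B‖ * ‖x‖ := by
          simpa using Matrix.norm_mulVec_le_card_mul (A ^ j * B) x
      _ ≤ p * (C * ρ ^ j) * ‖x‖ := by gcongr; exact hAB j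
      _ = p * C * ρ ^ j * ‖x‖ := by ring
  have hforced := tendsto_sum_range_reflect_zero_of_norm_le
    ((summable_geometric_of_lt_one hρ0 hρ1).mul_left (p * C)) hkernel he
  simpa [← Matrix.eq_pow_mulVec_add_sum_of_iterate hz] using hfree.add hforced

/-- A linear iteration `z_{k+1} = A z_k + B e_k` driven by a vanishing
perturbation entering through directions on which the powers of `A` decay
geometrically converges to the limit `P z_0` of the unperturbed iteration. -/
theorem stmt_13 (m p : ℕ)
    (A : Matrix (Fin m) (Fin m) ℝ) (B : Matrix (Fin m) (Fin p) ℝ)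
    (P : Matrix (Fin m) (Fin m) ℝ)
    (hP : Tendsto (fun k => A ^ k) atTop (nhds P))
    (C ρ : ℝ) (hC : 0 ≤ C) (hρ0 : 0 ≤ ρ) (hρ1 : ρ < 1)
    (hAB : ∀ k : ℕ, ‖A ^ k * B‖ ≤ C * ρ ^ k)
    (e : ℕ → Fin p → ℝ) (he : Tendsto e atTop (nhds 0))
    (z : ℕ → Fin m → ℝ)
    (hz : ∀ k, z (k + 1) = A.mulVec (z k) + B.mulVec (e k)) :
    Tendsto z atTop (nhds (P.mulVec (z 0))) :=
  stmt_13_general m p A B P hP C ρ hρ0 hρ1 hAB e he z hz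
end
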